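/- arXiv:2009.03860 — 4 statements merged into one kernel-verified Lean document; each statement's English description precedes it below -/
import Mathlib

section
/- Let U be a real-valued random variable with E[U] = 0 and probability density p. Let u_α be such that P(U² < u_α) = 1 − α. Then for any event Ω with P(Ω) ≥ 1 − α and E[U | Ω] = 0, we have E[U² | U² < u_α] ≤ E[U² | Ω]. -/
open MeasureTheory ProbabilityTheory

/-!
Write `A = {U² < uα}`. On `s \ A` the integrand is at least `uα` and on `A \ s` it is below `uα`,
so `A` minimises `∫_t (U² - uα)` over all events `t`. Hence `∫_s U²` exceeds `∫_A U²` by at least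
`uα (P(s) - P(A))`, while the average of `U²` over `A` is at most `uα`; since `P(A) ≤ P(s)`,
averaging over the larger event `s` can only increase the conditional mean.
-/

section

variable {X : Type*} [MeasurableSpace X] {μ : Measure X}

theorem setIntegral_setOf_neg_le {g : X → ℝ} (hg : Integrable g μ) {s : Set X}
    (hs : MeasurableSet s) : ∫ x in {x | g x < 0}, g x ∂μ ≤ ∫ x in s, g x ∂μ := by
  have ht : NullMeasurableSet {x | g x < 0} μ :=
    nullMeasurableSet_lt hg.aemeasurable aemeasurable_const
  rw [← integral_indicator₀ ht, ← integral_indicator hs]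
  refine integral_mono (hg.indicator₀ ht) (hg.indicator hs) fun x => ?_
  by_cases hxs : x ∈ s <;> by_cases hxt : g x < 0 <;>
    simp [Set.indicator, hxs, hxt] <;> linarith

theorem integral_cond_eq_inv_mul_setIntegral (μ : Measure X) (s : Set X) (f : X → ℝ) :
    ∫ x, f x ∂μ[|s] = (μ.real s)⁻¹ * ∫ x in s, f x ∂μ := by
  rw [ProbabilityTheory.cond, integral_smul_measure, ENNReal.toReal_inv, smul_eq_mul,
    measureReal_def]

variable [IsFiniteMeasure μ]

theorem setIntegral_setOf_lt_sub_le {f : X → ℝ} (hf : Integrable f μ) (c : ℝ) {s : Set X}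
    (hs : MeasurableSet s) :
    ∫ x in {x | f x < c}, f x ∂μ - c * μ.real {x | f x < c}
      ≤ ∫ x in s, f x ∂μ - c * μ.real s := by
  have key := setIntegral_setOf_neg_le (hf.sub (integrable_const c)) hs
  simp only [sub_neg, Pi.sub_apply] at key
  rwa [integral_sub hf.integrableOn (integrable_const c).integrableOn,
    integral_sub hf.integrableOn (integrable_const c).integrableOn, setIntegral_const,
    setIntegral_const, smul_eq_mul, smul_eq_mul, mul_comm _ c, mul_comm _ c] at key

theorem integral_cond_setOf_lt_le {f : X → ℝ} (hf : Integrable f μ) (c : ℝ) {s : Set X}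
    (hs : MeasurableSet s) (hpos : 0 < μ {x | f x < c}) (hle : μ {x | f x < c} ≤ μ s) :
    ∫ x, f x ∂μ[|{x | f x < c}] ≤ ∫ x, f x ∂μ[|s] := by
  set t := {x | f x < c}
  have hgap := setIntegral_setOf_lt_sub_le hf c hs
  -- the case `s = ∅` of the minimality of `t`
  have hbound : ∫ x in t, f x ∂μ ≤ c * μ.real t := by
    simpa using setIntegral_setOf_lt_sub_le hf c MeasurableSet.empty
  have ht : 0 < μ.real t := ENNReal.toReal_pos hpos.ne' (measure_ne_top μ t)
  have hts : μ.real t ≤ μ.real s := ENNReal.toReal_mono (measure_ne_top μ s) hle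
  rw [integral_cond_eq_inv_mul_setIntegral, integral_cond_eq_inv_mul_setIntegral,
    inv_mul_eq_div, inv_mul_eq_div, div_le_div_iff₀ ht (ht.trans_le hts)]
  nlinarith [mul_le_mul_of_nonneg_right hbound (sub_nonneg.2 hts)]

end

theorem stmt_0_general
    {Ω : Type*} [MeasurableSpace Ω] (μ : Measure Ω) [IsProbabilityMeasure μ]
    (U : Ω → ℝ)
    (hU2int : Integrable (fun ω => (U ω) ^ 2) μ)
    (α : ℝ) (hα : α ∈ Set.Ioo (0 : ℝ) 1)
    (uα : ℝ) (hquant : μ {ω | (U ω) ^ 2 < uα} = ENNReal.ofReal (1 - α))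
    (s : Set Ω) (hs : MeasurableSet s)
    (hsprob : ENNReal.ofReal (1 - α) ≤ μ s) :
    ∫ ω, (U ω) ^ 2 ∂(μ[|{ω | (U ω) ^ 2 < uα}]) ≤ ∫ ω, (U ω) ^ 2 ∂(μ[|s]) := by
  refine integral_cond_setOf_lt_le hU2int uα hs ?_ (hquant ▸ hsprob)
  rw [hquant, ENNReal.ofReal_pos]
  linarith [hα.2]

/-- For a mean-zero real random variable `U` with density `p`, the
conditional second moment given the tail-truncation event `{U² < uα}` (of probability
`1 - α`) is at most the conditional second moment given any event `s` of probability
at least `1 - α` on which `U` still has conditional mean zero. -/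
theorem stmt_0
    {Ω : Type*} [MeasurableSpace Ω] (μ : Measure Ω) [IsProbabilityMeasure μ]
    (U : Ω → ℝ) (hU : Measurable U)
    (p : ℝ → ENNReal) (hp : μ.map U = (volume : Measure ℝ).withDensity p)
    (hUint : Integrable U μ)
    (hU2int : Integrable (fun ω => (U ω) ^ 2) μ)
    (hmean : ∫ ω, U ω ∂μ = 0)
    (α : ℝ) (hα : α ∈ Set.Ioo (0 : ℝ) 1)
    (uα : ℝ) (hquant : μ {ω | (U ω) ^ 2 < uα} = ENNReal.ofReal (1 - α))
    (s : Set Ω) (hs : MeasurableSet s)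
    (hsprob : ENNReal.ofReal (1 - α) ≤ μ s)
    (hscond : ∫ ω, U ω ∂(μ[|s]) = 0) :
    ∫ ω, (U ω) ^ 2 ∂(μ[|{ω | (U ω) ^ 2 < uα}]) ≤ ∫ ω, (U ω) ^ 2 ∂(μ[|s]) :=
  stmt_0_general μ U hU2int α hα uα hquant s hs hsprob
end

section
/- Let n be even, n₁ = n₀ = n/2, and let A = (A₁,…,A_n) be uniform over {0,1}^n with Σ A_i = n₁, conditioned on a symmetric acceptance event ρ(A) = ρ(1−A). Given fixed weights w_i and potential outcomes y_i¹, y_i⁰, define τ̂ = (1/n₁)Σ_i w_i A_i y_i¹ − (1/n₀)Σ_i w_i (1−A_i) y_i⁰. Then E[τ̂ | ρ = 1] = (1/n)Σ_i w_i (y_i¹ − y_i⁰). -/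
/-- With a balanced assignment `A` (uniform over `{0,1}ⁿ` vectors with
`n/2` ones) conditioned on a symmetric acceptance event `ρ(a) = ρ(1-a)`, the
importance-weighted difference-in-means estimator has conditional expectation
`(1/n) Σᵢ wᵢ (yᵢ¹ - yᵢ⁰)`. -/
theorem stmt_5 (n : ℕ) (hn : 0 < n) (heven : Even n)
    (w y1 y0 : Fin n → ℝ)
    (ρ : (Fin n → Bool) → Bool)
    (hsym : ∀ a, ρ a = ρ (fun i => !(a i)))
    (T : Finset (Fin n → Bool))
    (hT : T = Finset.univ.filter fun a : Fin n → Bool =>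
      ((Finset.univ.filter fun i => a i).card = n / 2 ∧ ρ a = true))
    (hne : T.Nonempty)
    (τ : (Fin n → Bool) → ℝ)
    (hτ : ∀ a, τ a =
      (1 / ((n : ℝ) / 2)) * ∑ i, w i * (if a i then (1 : ℝ) else 0) * y1 i
      - (1 / ((n : ℝ) / 2)) * ∑ i, w i * (if a i then (0 : ℝ) else 1) * y0 i) :
    (∑ a ∈ T, τ a) / T.card = (1 / (n : ℝ)) * ∑ i, w i * (y1 i - y0 i) := by
  set N : (Fin n → Bool) → (Fin n → Bool) := fun a i => !(a i) with hN
  have hNN : ∀ a, N (N a) = a := by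
    intro a; funext i; simp [hN]
  have hmem : ∀ a ∈ T, N a ∈ T := by
    intro a ha
    rw [hT] at ha ⊢
    simp only [Finset.mem_filter, Finset.mem_univ, true_and] at ha ⊢
    obtain ⟨hcard, hρ⟩ := ha
    constructor
    · have : (Finset.univ.filter fun i => N a i = true) =
        Finset.univ \ (Finset.univ.filter fun i => a i = true) := by
        ext i; simp [hN]
      rw [this, Finset.card_sdiff_of_subset (Finset.filter_subset _ _), Finset.card_univ,
        Fintype.card_fin, hcard]
      obtain ⟨k, hk⟩ := heven
      omega
    · rw [← hsym a]; exact hρ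
  have hflip : ∑ a ∈ T, τ a = ∑ a ∈ T, τ (N a) := by
    exact (Finset.sum_nbij' N N hmem hmem (fun a _ => hNN a) (fun a _ => hNN a)
      (fun a _ => rfl)).symm
  have hpair : ∀ a, τ a + τ (N a) = (2 / (n : ℝ)) * ∑ i, w i * (y1 i - y0 i) := by
    intro a
    rw [hτ, hτ]
    have hn' : (n : ℝ) ≠ 0 := Nat.cast_ne_zero.mpr hn.ne'
    have e1 : (∑ i, w i * (if a i then (1:ℝ) else 0) * y1 i)
        + ∑ i, w i * (if N a i then (1:ℝ) else 0) * y1 i = ∑ i, w i * y1 i := by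
      rw [← Finset.sum_add_distrib]
      refine Finset.sum_congr rfl fun i _ => ?_
      cases h : a i <;> simp [hN, h]
    have e0 : (∑ i, w i * (if a i then (0:ℝ) else 1) * y0 i)
        + ∑ i, w i * (if N a i then (0:ℝ) else 1) * y0 i = ∑ i, w i * y0 i := by
      rw [← Finset.sum_add_distrib]
      refine Finset.sum_congr rfl fun i _ => ?_
      cases h : a i <;> simp [hN, h]
    have e2 : ∑ i, w i * (y1 i - y0 i) = (∑ i, w i * y1 i) - ∑ i, w i * y0 i := by
      rw [← Finset.sum_sub_distrib]
      exact Finset.sum_congr rfl fun i _ => by ring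
    have hc : (1:ℝ) / ((n:ℝ)/2) = 2 / n := by rw [one_div_div]
    rw [hc, e2, ← e1, ← e0]
    ring
  have h2 : 2 * ∑ a ∈ T, τ a = (T.card : ℝ) * ((2 / (n : ℝ)) * ∑ i, w i * (y1 i - y0 i)) := by
    calc 2 * ∑ a ∈ T, τ a = ∑ a ∈ T, τ a + ∑ a ∈ T, τ (N a) := by rw [← hflip]; ring
    _ = ∑ a ∈ T, (τ a + τ (N a)) := by rw [Finset.sum_add_distrib]
    _ = ∑ a ∈ T, (2 / (n : ℝ)) * ∑ i, w i * (y1 i - y0 i) := by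
        exact Finset.sum_congr rfl fun a _ => hpair a
    _ = (T.card : ℝ) * ((2 / (n : ℝ)) * ∑ i, w i * (y1 i - y0 i)) := by
        rw [Finset.sum_const, nsmul_eq_mul]
  have hTc : (T.card : ℝ) ≠ 0 := Nat.cast_ne_zero.mpr (Finset.card_ne_zero_of_mem hne.choose_spec)
  have hn' : (n : ℝ) ≠ 0 := Nat.cast_ne_zero.mpr hn.ne'
  field_simp at h2 ⊢
  linarith [h2]
end

section
/- Under the covariate-shift assumptions (p_S(Y|X) = p_T(Y|X), target support contained in source support) and with n₁ = n₀ = n/2, the importance-weighted difference-in-means estimator τ̂ = (1/n₁)Σ_i W_i A_i Y_i¹ − (1/n₀)Σ_i W_i(1−A_i)Y_i⁰, where (X_i,Y_i) are i.i.d. from the source, W_i = p_T(X_i)/p_S(X_i), and treatment assignment Z conditional on X is uniform over balanced assignments accepted by a symmetric balance rule φ(x, z) = φ(x, −z), satisfies E[τ̂] = E_T[Y¹ − Y⁰]. -/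
/-!
Averaging the estimator over the accepted assignments removes the assignment: the set of
accepted balanced assignments is closed under the sign flip `z ↦ ¬z`, so each unit is treated
in exactly half of them, and the average of `τ̂` is the empirical mean `(1/n) ∑ᵢ Wᵢ (Yᵢ¹ - Yᵢ⁰)`.
Its expectation under i.i.d. source sampling is `E_S[W (Y¹ - Y⁰)]`. Since the outcome kernel is
shared, this equals `∫ W(x) m(x) dP_S(x)` with `m(x) = E[Y¹ - Y⁰ | X = x]`, and the weight
`W = p_T / p_S` turns it into `∫ m dP_T = E_T[Y¹ - Y⁰]`, overlap guaranteeing that the set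
`{p_S = 0}`, where `W` is junk, is `P_T`-null.
-/

open MeasureTheory ProbabilityTheory Finset

open scoped ENNReal

section SignFlip

variable {ι : Type*} {s : Finset (ι → Bool)}

lemma card_filter_apply_eq_card_filter_not_apply (hs : ∀ z ∈ s, (fun i => !z i) ∈ s) (i : ι) :
    #{z ∈ s | z i} = #{z ∈ s | ¬ z i} := by
  refine card_nbij' (fun z j => !z j) (fun z j => !z j) ?_ ?_ ?_ ?_ <;> intro z hz <;> simp_all

lemma two_mul_sum_ite_of_flip_mem {R : Type*} [CommSemiring R]
    (hs : ∀ z ∈ s, (fun i => !z i) ∈ s) (i : ι) (a b : R) :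
    2 * ∑ z ∈ s, (if z i then a else b) = #s * (a + b) := by
  rw [sum_ite, sum_const, sum_const, nsmul_eq_mul, nsmul_eq_mul,
    ← card_filter_add_card_filter_not (s := s) (fun z => z i),
    ← card_filter_apply_eq_card_filter_not_apply hs i]
  push_cast
  ring

lemma two_mul_sum_sum_ite_of_flip_mem {R : Type*} [CommSemiring R] [Fintype ι]
    (hs : ∀ z ∈ s, (fun i => !z i) ∈ s) (w a b : ι → R) :
    2 * ∑ z ∈ s, ∑ i, w i * (if z i then a i else b i) = #s * ∑ i, w i * (a i + b i) := by
  rw [sum_comm, mul_sum, mul_sum]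
  refine sum_congr rfl fun i _ => ?_
  rw [← mul_sum, mul_left_comm, two_mul_sum_ite_of_flip_mem hs i, mul_left_comm]

lemma card_filter_not_eq_half {n : ℕ} (heven : Even n) {z : Fin n → Bool}
    (hz : (univ.filter fun i => z i).card = n / 2) :
    (univ.filter fun i => (!z i) = true).card = n / 2 := by
  have h := card_filter_add_card_filter_not (s := (univ : Finset (Fin n))) (fun i => z i)
  simp only [Bool.not_eq_true, Bool.not_eq_true'] at h ⊢
  rw [card_univ, Fintype.card_fin, hz] at h
  obtain ⟨k, rfl⟩ := heven
  omega

end SignFlip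

lemma integral_pi_sum_div_card {ι α : Type*} [Fintype ι] [Nonempty ι] [MeasurableSpace α]
    {μ : Measure α} [IsProbabilityMeasure μ] {g : α → ℝ} (hg : Integrable g μ) :
    ∫ ω, (∑ i, g (ω i)) / Fintype.card ι ∂Measure.pi (fun _ : ι => μ) = ∫ a, g a ∂μ := by
  rw [integral_div, integral_finsetSum _ fun i _ => integrable_comp_eval hg]
  simp only [fun i => integral_comp_eval (μ := fun _ : ι => μ) (i := i) hg.aestronglyMeasurable,
    sum_const, card_univ, nsmul_eq_mul]
  field_simp

section ImportanceWeight

variable {X : Type*} [MeasurableSpace X] {ν : Measure X}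

lemma ae_lt_top_of_isFiniteMeasure_withDensity {p : X → ℝ≥0∞} (hp : Measurable p)
    [IsFiniteMeasure (ν.withDensity p)] : ∀ᵐ x ∂ν, p x < ∞ :=
  ae_lt_top hp <| by
    simpa [withDensity_apply _ MeasurableSet.univ] using measure_ne_top (ν.withDensity p) .univ

variable {pS pT : X → ℝ≥0∞} [IsFiniteMeasure (ν.withDensity pS)]
  [IsFiniteMeasure (ν.withDensity pT)]

lemma integral_withDensity_toReal_div_mul (hpS : Measurable pS) (hpT : Measurable pT)
    (hover : ∀ᵐ x ∂ν, pS x = 0 → pT x = 0) (f : X → ℝ) :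
    ∫ x, (pT x / pS x).toReal * f x ∂ν.withDensity pS = ∫ x, f x ∂ν.withDensity pT := by
  rw [integral_withDensity_eq_integral_toReal_smul hpS
      (ae_lt_top_of_isFiniteMeasure_withDensity hpS),
    integral_withDensity_eq_integral_toReal_smul hpT
      (ae_lt_top_of_isFiniteMeasure_withDensity hpT)]
  refine integral_congr_ae ?_
  filter_upwards [hover, ae_lt_top_of_isFiniteMeasure_withDensity hpS] with x hx hxS
  rcases eq_or_ne (pS x) 0 with h0 | h0
  · simp [h0, hx h0]
  · have : (pS x).toReal ≠ 0 := ENNReal.toReal_ne_zero.mpr ⟨h0, hxS.ne⟩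
    simp only [smul_eq_mul, ENNReal.toReal_div]
    field_simp

lemma integral_compProd_toReal_div_mul {Y : Type*} [MeasurableSpace Y] {κ : Kernel X Y}
    [IsSFiniteKernel κ] (hpS : Measurable pS) (hpT : Measurable pT)
    (hover : ∀ᵐ x ∂ν, pS x = 0 → pT x = 0) {f : X × Y → ℝ}
    (hfS : Integrable (fun p => (pT p.1 / pS p.1).toReal * f p) ((ν.withDensity pS).compProd κ))
    (hfT : Integrable f ((ν.withDensity pT).compProd κ)) :
    ∫ p, (pT p.1 / pS p.1).toReal * f p ∂(ν.withDensity pS).compProd κ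
      = ∫ p, f p ∂(ν.withDensity pT).compProd κ := by
  rw [Measure.integral_compProd hfS, Measure.integral_compProd hfT]
  simp only [integral_const_mul]
  exact integral_withDensity_toReal_div_mul hpS hpT hover _

end ImportanceWeight

theorem stmt_14_general {X : Type*} [MeasurableSpace X]
    (n : ℕ) (hn : 0 < n) (heven : Even n)
    (ν : Measure X)
    (pS pT : X → ENNReal) (hpS : Measurable pS) (hpT : Measurable pT)
    (hS : IsProbabilityMeasure (ν.withDensity pS))
    (hT : IsProbabilityMeasure (ν.withDensity pT))
    (hover : ∀ x, 0 < pT x → 0 < pS x)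
    -- potential-outcome kernel, identical for source and target (S-admissibility):
    -- given X = x, (Y⁰, Y¹) ~ κ x
    (κ : ProbabilityTheory.Kernel X (ℝ × ℝ)) [ProbabilityTheory.IsMarkovKernel κ]
    -- symmetric balance rule depending only on covariates
    (φ : (Fin n → X) → (Fin n → Bool) → Bool)
    (hφsym : ∀ x z, φ x z = φ x (fun i => !(z i)))
    (T : (Fin n → X) → Finset (Fin n → Bool))
    (hTdef : ∀ x, T x = Finset.univ.filter fun z : Fin n → Bool =>
      ((Finset.univ.filter fun i => z i).card = n / 2 ∧ φ x z = true))
    (hne : ∀ x, (T x).Nonempty)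
    -- importance weight
    (W : X → ℝ) (hW : ∀ x, W x = (pT x / pS x).toReal)
    -- the importance-weighted difference-in-means estimator, n₁ = n₀ = n/2
    (τ : (Fin n → X × ℝ × ℝ) → (Fin n → Bool) → ℝ)
    (hτ : ∀ ω z, τ ω z = (2 / (n : ℝ)) *
      ∑ i, W (ω i).1 * (if z i then (ω i).2.2 else -(ω i).2.1))
    -- integrability assumptions
    (hintS1 : Integrable (fun p : X × ℝ × ℝ => (pT p.1 / pS p.1).toReal * p.2.1)
      ((ν.withDensity pS).compProd κ))
    (hintS2 : Integrable (fun p : X × ℝ × ℝ => (pT p.1 / pS p.1).toReal * p.2.2)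
      ((ν.withDensity pS).compProd κ))
    (hintT : Integrable (fun p : X × ℝ × ℝ => p.2.2 - p.2.1)
      ((ν.withDensity pT).compProd κ)) :
    ∫ ω, (∑ z ∈ T (fun i => (ω i).1), τ ω z) / (T (fun i => (ω i).1)).card
        ∂(Measure.pi fun _ : Fin n => (ν.withDensity pS).compProd κ)
      = ∫ p, p.2.2 - p.2.1 ∂((ν.withDensity pT).compProd κ) := by
  have hflip : ∀ x, ∀ z ∈ T x, (fun i => !z i) ∈ T x := by
    intro x z hz
    rw [hTdef, mem_filter] at hz ⊢
    exact ⟨mem_univ _, card_filter_not_eq_half heven hz.2.1, hφsym x z ▸ hz.2.2⟩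
  have haverage : ∀ ω : Fin n → X × ℝ × ℝ,
      (∑ z ∈ T (fun i => (ω i).1), τ ω z) / (T (fun i => (ω i).1)).card
        = (∑ i, (pT (ω i).1 / pS (ω i).1).toReal * ((ω i).2.2 - (ω i).2.1))
          / Fintype.card (Fin n) := by
    intro ω
    have h := two_mul_sum_sum_ite_of_flip_mem (hflip fun i => (ω i).1) (fun i => W (ω i).1)
      (fun i => (ω i).2.2) (fun i => -(ω i).2.1)
    have hcard : ((T fun i => (ω i).1).card : ℝ) ≠ 0 := by exact_mod_cast (hne _).card_ne_zero
    simp only [hτ, ← mul_sum, ← hW, ← sub_eq_add_neg] at h ⊢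
    rw [Fintype.card_fin]
    field_simp
    linear_combination h
  have hoverlap : ∀ᵐ x ∂ν, pS x = 0 → pT x = 0 :=
    ae_of_all _ fun x h0 => by simpa [h0] using mt (hover x)
  have hweighted : Integrable (fun p : X × ℝ × ℝ => (pT p.1 / pS p.1).toReal * (p.2.2 - p.2.1))
      ((ν.withDensity pS).compProd κ) := by
    simp_rw [mul_sub]
    exact hintS2.sub hintS1
  have : Nonempty (Fin n) := ⟨⟨0, hn⟩⟩
  rw [integral_congr_ae (ae_of_all _ haverage), integral_pi_sum_div_card hweighted]
  exact integral_compProd_toReal_div_mul hpS hpT hoverlap hweighted hintT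

/-- Unbiasedness of the importance-weighted estimator under Target
Balance. Source samples `(Xᵢ, Yᵢ⁰, Yᵢ¹)` are i.i.d. with covariate density `pS`
(w.r.t. `ν`) and shared outcome kernel `κ` (so `p_S(Y|X) = p_T(Y|X)`); the target
has density `pT` with overlap; treatment assignment, conditionally on the
covariates, is uniform over balanced assignments accepted by a sign-symmetric
balance rule `φ(x,z) = φ(x,-z)`; `Wᵢ = pT(Xᵢ)/pS(Xᵢ)` and `n₁ = n₀ = n/2`. Then
`E[τ̂] = E_T[Y¹ - Y⁰]`. -/
theorem stmt_14 {X : Type*} [MeasurableSpace X]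
    (n : ℕ) (hn : 0 < n) (heven : Even n)
    (ν : Measure X) [SigmaFinite ν]
    (pS pT : X → ENNReal) (hpS : Measurable pS) (hpT : Measurable pT)
    (hSfin : ∀ x, pS x ≠ ⊤) (hTfin : ∀ x, pT x ≠ ⊤)
    (hS : IsProbabilityMeasure (ν.withDensity pS))
    (hT : IsProbabilityMeasure (ν.withDensity pT))
    (hover : ∀ x, 0 < pT x → 0 < pS x)
    -- potential-outcome kernel, identical for source and target (S-admissibility):
    -- given X = x, (Y⁰, Y¹) ~ κ x
    (κ : ProbabilityTheory.Kernel X (ℝ × ℝ)) [ProbabilityTheory.IsMarkovKernel κ]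
    -- symmetric balance rule depending only on covariates
    (φ : (Fin n → X) → (Fin n → Bool) → Bool)
    (hφsym : ∀ x z, φ x z = φ x (fun i => !(z i)))
    (T : (Fin n → X) → Finset (Fin n → Bool))
    (hTdef : ∀ x, T x = Finset.univ.filter fun z : Fin n → Bool =>
      ((Finset.univ.filter fun i => z i).card = n / 2 ∧ φ x z = true))
    (hne : ∀ x, (T x).Nonempty)
    -- importance weight
    (W : X → ℝ) (hW : ∀ x, W x = (pT x / pS x).toReal)
    -- the importance-weighted difference-in-means estimator, n₁ = n₀ = n/2
    (τ : (Fin n → X × ℝ × ℝ) → (Fin n → Bool) → ℝ)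
    (hτ : ∀ ω z, τ ω z = (2 / (n : ℝ)) *
      ∑ i, W (ω i).1 * (if z i then (ω i).2.2 else -(ω i).2.1))
    -- integrability assumptions
    (hint : Integrable
      (fun ω : Fin n → X × ℝ × ℝ =>
        (∑ z ∈ T (fun i => (ω i).1), τ ω z) / (T (fun i => (ω i).1)).card)
      (Measure.pi fun _ : Fin n => (ν.withDensity pS).compProd κ))
    (hintS1 : Integrable (fun p : X × ℝ × ℝ => (pT p.1 / pS p.1).toReal * p.2.1)
      ((ν.withDensity pS).compProd κ))
    (hintS2 : Integrable (fun p : X × ℝ × ℝ => (pT p.1 / pS p.1).toReal * p.2.2)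
      ((ν.withDensity pS).compProd κ))
    (hintT : Integrable (fun p : X × ℝ × ℝ => p.2.2 - p.2.1)
      ((ν.withDensity pT).compProd κ)) :
    ∫ ω, (∑ z ∈ T (fun i => (ω i).1), τ ω z) / (T (fun i => (ω i).1)).card
        ∂(Measure.pi fun _ : Fin n => (ν.withDensity pS).compProd κ)
      = ∫ p, p.2.2 - p.2.1 ∂((ν.withDensity pT).compProd κ) :=
  stmt_14_general n hn heven ν pS pT hpS hpT hS hT hover κ φ hφsym T hTdef hne W hW τ hτ hintS1
    hintS2 hintT
end

section
/- Expected-direction optimality: with V = (2/n)(wx)ᵀZ, if β is uniformly distributed on the sphere of radius l in R^d (independent of everything else), then for the acceptance event {‖V‖² < a} with P(‖V‖² < a) = 1 − α, and for any symmetric acceptance rule ρ with P(ρ=1|x) ≥ 1 − α, E_β[Var(τ̂ | x, ‖V‖² < a)] ≤ E_β[Var(τ̂ | x, ρ = 1)]. -/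
/-!
Fix `β`. For each assignment `z`, `τ̂` splits as `c + (⟪β, V z⟫ + B(ε, z)) + H(ε)`, where the
middle term changes sign under `z ↦ zᶜ` and `H = (2/n) ∑ wᵢ (ε₁ᵢ - ε₀ᵢ)/2` does not depend on `z`.
On an acceptance set closed under `zᶜ` the odd part averages to zero, so the conditional variance is
`avg_T ⟪β, V z⟫² + K + 𝔼 H²` with `K = (2/n)² ∑ wᵢ² Var((ε₀ + ε₁)/2)` independent of the set.
For a rotation-invariant `β` on the sphere of radius `l`, `𝔼 ⟪β, v⟫² = l² ‖v‖² / d`: all unit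
vectors give the same second moment, and over an orthonormal basis these moments add up to `l²`.
The expected variance is therefore increasing in the average of `‖V‖²` over the acceptance set,
and the sublevel set `{‖V‖² < a}` has the smallest such average among sets at least as large.
-/

open MeasureTheory ProbabilityTheory Finset
open scoped RealInnerProductSpace

section Sphere
variable {E : Type*} [NormedAddCommGroup E] [InnerProductSpace ℝ E] [MeasurableSpace E]
  [BorelSpace E] {μ : Measure E} {l : ℝ}

lemma integrable_inner_sq_of_ae_norm_eq [IsFiniteMeasure μ] (hμ : ∀ᵐ b ∂μ, ‖b‖ = l) (v : E) :
    Integrable (fun b => ⟪b, v⟫ ^ 2) μ := by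
  refine Integrable.mono' (integrable_const ((l * ‖v‖) ^ 2)) (by fun_prop) ?_
  filter_upwards [hμ] with b hb
  rw [Real.norm_eq_abs, abs_sq, ← hb, ← sq_abs _]
  exact pow_le_pow_left₀ (abs_nonneg _) (abs_real_inner_le_norm b v) 2

lemma integral_inner_sq_eq_of_norm_eq (hrot : ∀ O : E ≃ₗᵢ[ℝ] E, μ.map O = μ) {u v : E}
    (huv : ‖u‖ = ‖v‖) : ∫ b, ⟪b, u⟫ ^ 2 ∂μ = ∫ b, ⟪b, v⟫ ^ 2 ∂μ := by
  set O := (ℝ ∙ (u - v))ᗮ.reflection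
  have hOv : O v = u := by rw [← Submodule.reflection_sub huv, Submodule.reflection_reflection]
  conv_lhs => rw [← hrot O]
  rw [integral_map (by fun_prop) (by fun_prop)]
  congr 1 with b
  rw [← hOv, O.inner_map_map]

lemma integral_inner_sq_of_ae_norm_eq [FiniteDimensional ℝ E] [IsProbabilityMeasure μ]
    (hμ : ∀ᵐ b ∂μ, ‖b‖ = l) (hrot : ∀ O : E ≃ₗᵢ[ℝ] E, μ.map O = μ) (v : E) :
    ∫ b, ⟪b, v⟫ ^ 2 ∂μ = l ^ 2 * ‖v‖ ^ 2 / Module.finrank ℝ E := by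
  set e := stdOrthonormalBasis ℝ E
  have hsum : ∑ k, ∫ b, ⟪b, ‖v‖ • e k⟫ ^ 2 ∂μ = l ^ 2 * ‖v‖ ^ 2 := by
    rw [← integral_finsetSum _ fun k _ => integrable_inner_sq_of_ae_norm_eq hμ _]
    calc ∫ b, ∑ k, ⟪b, ‖v‖ • e k⟫ ^ 2 ∂μ = ∫ b, ‖v‖ ^ 2 * ‖b‖ ^ 2 ∂μ := by
          congr 1 with b
          simp_rw [inner_smul_right, mul_pow, ← mul_sum, e.sum_sq_inner_left]
      _ = l ^ 2 * ‖v‖ ^ 2 := by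
          rw [integral_congr_ae (hμ.mono fun b hb => by rw [hb]), integral_const]
          simp [mul_comm]
  have hterm : ∀ k, ∫ b, ⟪b, ‖v‖ • e k⟫ ^ 2 ∂μ = ∫ b, ⟪b, v⟫ ^ 2 ∂μ := fun k =>
    integral_inner_sq_eq_of_norm_eq hrot (by simp [norm_smul, e.orthonormal.1 k])
  simp only [hterm, sum_const, card_univ, Fintype.card_fin, nsmul_eq_mul] at hsum
  rcases (Module.finrank ℝ E).eq_zero_or_pos with hd | hd
  · have : v = 0 := Subsingleton.elim (h := Module.finrank_zero_iff.1 hd) v 0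
    simp [this]
  · rw [← hsum]
    field_simp

end Sphere

lemma sum_div_card_le_of_sublevel {ι : Type*} [DecidableEq ι] {s t : Finset ι} {f : ι → ℝ}
    {a : ℝ} (hs : ∀ z ∈ s, f z ≤ a) (ht : ∀ z ∈ t \ s, a ≤ f z) (hcard : #s ≤ #t)
    (hs₀ : s.Nonempty) : (∑ z ∈ s, f z) / #s ≤ (∑ z ∈ t, f z) / #t := by
  set m := (∑ z ∈ s, f z) / #s
  have hs_pos : (0 : ℝ) < #s := by exact_mod_cast hs₀.card_pos
  have ht_pos : (0 : ℝ) < #t := hs_pos.trans_le (by exact_mod_cast hcard)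
  have hm : m ≤ a := (div_le_iff₀ hs_pos).2 <| by simpa [mul_comm] using sum_le_sum hs
  have hsum_s : ∑ z ∈ s ∩ t, f z + ∑ z ∈ s \ t, f z = #s * m := by
    rw [sum_inter_add_sum_sdiff, mul_div_cancel₀ _ hs_pos.ne']
  have hsum_t : ∑ z ∈ s ∩ t, f z + ∑ z ∈ t \ s, f z = ∑ z ∈ t, f z := by
    rw [inter_comm, sum_inter_add_sum_sdiff]
  have hst : ∑ z ∈ s \ t, f z ≤ #(s \ t) * a := by
    simpa using sum_le_sum fun z hz => hs z (mem_sdiff.1 hz).1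
  have hts : #(t \ s) * a ≤ ∑ z ∈ t \ s, f z := by simpa using sum_le_sum ht
  have hcards : (#(t \ s) : ℝ) - #(s \ t) = #t - #s := by
    have hs_split := card_inter_add_card_sdiff s t
    have ht_split := card_inter_add_card_sdiff t s
    rw [inter_comm] at ht_split
    push_cast [← hs_split, ← ht_split]; ring
  have hgap : 0 ≤ ((#t : ℝ) - #s) * (a - m) :=
    mul_nonneg (sub_nonneg.2 (by exact_mod_cast hcard)) (sub_nonneg.2 hm)
  -- `∑ₜ f ≥ ∑_{s ∩ t} f + #(t \ s) a ≥ #s m + (#t - #s) a ≥ #t m`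
  rw [le_div_iff₀ ht_pos]
  linear_combination hsum_t - hsum_s + hts + hst + hgap - a * hcards

lemma sum_eq_zero_of_involutive_of_neg {ι : Type*} {T : Finset ι} {σ : ι → ι}
    (hσT : ∀ z ∈ T, σ z ∈ T) (hσ : Function.Involutive σ) {F : ι → ℝ}
    (hF : ∀ z, F (σ z) = -F z) : ∑ z ∈ T, F z = 0 :=
  sum_involution (fun z _ => σ z) (fun z _ => by rw [hF, add_neg_cancel])
    (fun z _ hz hfix => hz (by linarith [hfix ▸ hF z])) hσT (fun z _ => hσ z)

-- `Var(f e z)` for `e ∼ ν` and, independently, `z` uniform on `T`.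
noncomputable def condVariance {Ω ι : Type*} [MeasurableSpace Ω] (ν : Measure Ω) (T : Finset ι)
    (f : Ω → ι → ℝ) : ℝ :=
  ∫ e, (∑ z ∈ T, (f e z - ∫ e', (∑ z' ∈ T, f e' z') / #T ∂ν) ^ 2) / #T ∂ν

-- The `else 0` is Bochner's junk value: without `∫ h² < ∞` the integrand is not integrable.
open Classical in
lemma condVariance_eq {Ω ι : Type*} [MeasurableSpace Ω] {ν : Measure Ω} [IsProbabilityMeasure ν]
    {T : Finset ι} (hT : T.Nonempty) {f u : Ω → ι → ℝ} {c : ℝ} {h : Ω → ℝ}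
    (hf : ∀ e z, f e z = c + u e z + h e) (hu : ∀ e, ∑ z ∈ T, u e z = 0)
    (hu2 : ∀ z, Integrable (fun e => u e z ^ 2) ν) (hh : Integrable h ν) (hh0 : ∫ e, h e ∂ν = 0) :
    condVariance ν T f = if Integrable (fun e => h e ^ 2) ν
      then (∑ z ∈ T, ∫ e, u e z ^ 2 ∂ν) / #T + ∫ e, h e ^ 2 ∂ν else 0 := by
  have hT₀ : (#T : ℝ) ≠ 0 := by exact_mod_cast hT.card_pos.ne'
  have havg : ∀ e, (∑ z ∈ T, f e z) / #T = c + h e := fun e => by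
    simp_rw [hf, sum_add_distrib, hu, sum_const, nsmul_eq_mul]
    field_simp; ring
  have hmean : ∫ e, (∑ z ∈ T, f e z) / #T ∂ν = c := by
    simp_rw [havg]
    rw [integral_add (integrable_const c) hh, hh0]; simp
  have hdev : ∀ e, (∑ z ∈ T, (f e z - c) ^ 2) / #T = (∑ z ∈ T, u e z ^ 2) / #T + h e ^ 2 :=
    fun e => by
      have : ∑ z ∈ T, (f e z - c) ^ 2 = ∑ z ∈ T, u e z ^ 2 + 2 * h e * ∑ z ∈ T, u e z
          + #T * h e ^ 2 := by
        simp_rw [hf, mul_sum, ← sum_add_distrib, ← nsmul_eq_mul, ← sum_const, ← sum_add_distrib]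
        exact sum_congr rfl fun z _ => by ring
      rw [this, hu]
      field_simp; ring
  have hU : Integrable (fun e => (∑ z ∈ T, u e z ^ 2) / #T) ν :=
    (integrable_finsetSum _ fun z _ => hu2 z).div_const _
  rw [condVariance, hmean]
  simp_rw [hdev]
  split_ifs with hh2
  · rw [integral_add hU hh2, integral_div, integral_finsetSum _ fun z _ => hu2 z]
  · refine integral_undef fun hint => hh2 ?_
    exact (hint.sub hU).congr (.of_eq (funext fun e => by simp))

section ProductMeasure
variable {ι E : Type*} [Fintype ι] [MeasurableSpace E] {ν : Measure E} [IsProbabilityMeasure ν]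
  {g : E → ℝ} (c : ι → ℝ)

lemma integrable_sum_mul_comp_eval (hg : Integrable g ν) :
    Integrable (fun e : ι → E => ∑ i, c i * g (e i)) (Measure.pi fun _ => ν) :=
  integrable_finsetSum _ fun i _ => (integrable_comp_eval hg).const_mul (c i)

lemma integral_sum_mul_comp_eval (hg : Integrable g ν) :
    ∫ e : ι → E, ∑ i, c i * g (e i) ∂(Measure.pi fun _ => ν) = (∑ i, c i) * ∫ y, g y ∂ν := by
  rw [integral_finsetSum _ fun i _ => (integrable_comp_eval hg).const_mul (c i), sum_mul]
  refine sum_congr rfl fun i _ => ?_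
  rw [integral_const_mul, integral_comp_eval (μ := fun _ => ν) hg.aestronglyMeasurable]

lemma memLp_sum_mul_comp_eval (hg : MemLp g 2 ν) :
    MemLp (fun e : ι → E => ∑ i, c i * g (e i)) 2 (Measure.pi fun _ => ν) :=
  memLp_finsetSum _ fun i _ =>
    (hg.comp_measurePreserving (measurePreserving_eval _ i)).const_mul (c i)

lemma variance_sum_mul_comp_eval (hg : MemLp g 2 ν) :
    Var[fun e : ι → E => ∑ i, c i * g (e i); Measure.pi fun _ => ν] =
      (∑ i, c i ^ 2) * Var[g; ν] := by
  have hX : ∀ i, MemLp (fun e : ι → E => c i * g (e i)) 2 (Measure.pi fun _ => ν) := fun i =>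
    (hg.comp_measurePreserving (measurePreserving_eval _ i)).const_mul (c i)
  have hind := iIndepFun_pi (μ := fun _ : ι => ν) (X := fun i y => c i * g y)
    fun i => (hg.aestronglyMeasurable.const_mul (c i)).aemeasurable
  have hsum := IndepFun.variance_sum (s := univ) (fun i _ => hX i)
    fun i _ j _ hij => hind.indepFun hij
  rw [sum_fn] at hsum
  rw [hsum, sum_mul]
  refine sum_congr rfl fun i _ => ?_
  have hmap := (measurePreserving_eval (fun _ : ι => ν) i).map_eq
  have hvar := variance_map (X := g) (by rw [hmap]; exact hg.aemeasurable)
    (measurable_pi_apply i).aemeasurable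
  rw [hmap] at hvar
  rw [variance_const_mul, hvar]
  rfl

end ProductMeasure

lemma integral_const_add_sq {Ω : Type*} [MeasurableSpace Ω] {μ : Measure Ω}
    [IsProbabilityMeasure μ] {X : Ω → ℝ} (hX : MemLp X 2 μ) (hX0 : ∫ ω, X ω ∂μ = 0) (t : ℝ) :
    ∫ ω, (t + X ω) ^ 2 ∂μ = t ^ 2 + Var[X; μ] := by
  have hmean : ∫ ω, (t + X ω) ∂μ = t := by
    rw [integral_add (integrable_const t) (hX.integrable one_le_two), hX0]; simp
  have hY : MemLp (fun ω => t + X ω) 2 μ := (memLp_const t).add hX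
  have := variance_eq_sub hY
  rw [variance_const_add hX.aestronglyMeasurable, hmean] at this
  simp only [Pi.pow_apply] at this
  linarith

section Model
variable {n d : ℕ} (x : Fin n → Fin d → ℝ) (w : Fin n → ℝ)

noncomputable def imbalance (z : Fin n → Bool) : EuclideanSpace ℝ (Fin d) :=
  WithLp.toLp 2 fun k => (2 / (n : ℝ)) * ∑ i, w i * x i k * (if z i then 1 else -1)

noncomputable def estimator (γ : Fin d → ℝ) (β : EuclideanSpace ℝ (Fin d))
    (e : Fin n → ℝ × ℝ) (z : Fin n → Bool) : ℝ :=
  (2 / (n : ℝ)) * ∑ i, (if z i then w i * ((∑ k, (β k + γ k) * x i k) + (e i).2)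
    else -(w i * ((∑ k, (β k - γ k) * x i k) + (e i).1)))

noncomputable def signedNoise (e : Fin n → ℝ × ℝ) (z : Fin n → Bool) : ℝ :=
  ∑ i, (2 / (n : ℝ) * w i * if z i then 1 else -1) * (((e i).1 + (e i).2) / 2)

noncomputable def commonNoise (e : Fin n → ℝ × ℝ) : ℝ :=
  ∑ i, (2 / (n : ℝ) * w i) * (((e i).2 - (e i).1) / 2)

lemma inner_imbalance (β : EuclideanSpace ℝ (Fin d)) (z : Fin n → Bool) :
    ⟪β, imbalance x w z⟫ = 2 / n * ∑ i, (w i * if z i then 1 else -1) * ∑ k, β k * x i k := by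
  simp only [imbalance, PiLp.inner_apply, RCLike.inner_apply, conj_trivial, mul_sum, sum_mul]
  rw [sum_comm]
  refine sum_congr rfl fun i _ => sum_congr rfl fun k _ => by ring

lemma imbalance_compl (z : Fin n → Bool) : imbalance x w zᶜ = -imbalance x w z := by
  ext k
  simp only [imbalance, PiLp.neg_apply, ← mul_neg, ← sum_neg_distrib]
  congr 2 with i
  cases h : z i <;> simp [h]

lemma signedNoise_compl (e : Fin n → ℝ × ℝ) (z : Fin n → Bool) :
    signedNoise w e zᶜ = -signedNoise w e z := by
  simp only [signedNoise, ← sum_neg_distrib]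
  congr 1 with i
  cases h : z i <;> simp [h]

lemma estimator_eq (γ : Fin d → ℝ) (β : EuclideanSpace ℝ (Fin d)) (e : Fin n → ℝ × ℝ)
    (z : Fin n → Bool) :
    estimator x w γ β e z = 2 / n * ∑ i, w i * ∑ k, γ k * x i k
      + (⟪β, imbalance x w z⟫ + signedNoise w e z) + commonNoise w e := by
  rw [estimator, inner_imbalance, signedNoise, commonNoise, mul_sum, mul_sum, mul_sum,
    ← sum_add_distrib, ← sum_add_distrib, ← sum_add_distrib]
  refine sum_congr rfl fun i _ => ?_
  simp only [add_mul, sub_mul, sum_add_distrib, sum_sub_distrib]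
  cases z i <;> simp <;> ring

lemma integrable_and_integral_sq_inner_imbalance_add_signedNoise {μ₀ : Measure (ℝ × ℝ)}
    [IsProbabilityMeasure μ₀]
    (hmid : MemLp (fun p : ℝ × ℝ => (p.1 + p.2) / 2) 2 μ₀)
    (hmid₀ : ∫ p, (p.1 + p.2) / 2 ∂μ₀ = 0) (β : EuclideanSpace ℝ (Fin d)) (z : Fin n → Bool) :
    Integrable (fun e => (⟪β, imbalance x w z⟫ + signedNoise w e z) ^ 2)
        (Measure.pi fun _ => μ₀) ∧
      ∫ e, (⟪β, imbalance x w z⟫ + signedNoise w e z) ^ 2 ∂(Measure.pi fun _ => μ₀) =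
        ⟪β, imbalance x w z⟫ ^ 2 +
          (2 / n) ^ 2 * (∑ i, w i ^ 2) * Var[fun p : ℝ × ℝ => (p.1 + p.2) / 2; μ₀] := by
  let c : Fin n → ℝ := fun i => 2 / (n : ℝ) * w i * if z i then 1 else -1
  have hG : MemLp (signedNoise w · z) 2 (Measure.pi fun _ => μ₀) :=
    memLp_sum_mul_comp_eval c hmid
  have hG₀ : ∫ e, signedNoise w e z ∂(Measure.pi fun _ => μ₀) = 0 := by
    unfold signedNoise
    rw [integral_sum_mul_comp_eval c (hmid.integrable one_le_two), hmid₀, mul_zero]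
  have hc : ∑ i, c i ^ 2 = (2 / n) ^ 2 * ∑ i, w i ^ 2 := by
    rw [mul_sum]
    exact sum_congr rfl fun i _ => by cases z i <;> simp [c] <;> ring
  have hY := (memLp_const (μ := Measure.pi fun _ : Fin n => μ₀) (p := 2)
    ⟪β, imbalance x w z⟫).add hG
  refine ⟨hY.integrable_sq, ?_⟩
  rw [integral_const_add_sq hG hG₀]
  unfold signedNoise
  rw [variance_sum_mul_comp_eval c hmid, hc]

open Classical in
lemma condVariance_estimator {μ₀ : Measure (ℝ × ℝ)} [IsProbabilityMeasure μ₀]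
    (h₁ : Integrable (fun p : ℝ × ℝ => p.1) μ₀) (h₂ : Integrable (fun p : ℝ × ℝ => p.2) μ₀)
    (hmid_sq : Integrable (fun p : ℝ × ℝ => ((p.1 + p.2) / 2) ^ 2) μ₀)
    (hmean₁ : ∫ p, (p : ℝ × ℝ).1 ∂μ₀ = 0) (hmean₂ : ∫ p, (p : ℝ × ℝ).2 ∂μ₀ = 0)
    (γ : Fin d → ℝ) (β : EuclideanSpace ℝ (Fin d))
    {T : Finset (Fin n → Bool)} (hT : T.Nonempty) (hTc : ∀ z ∈ T, zᶜ ∈ T) :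
    condVariance (Measure.pi fun _ => μ₀) T (estimator x w γ β) =
      if Integrable (fun e => commonNoise w e ^ 2) (Measure.pi fun _ => μ₀) then
        (∑ z ∈ T, ⟪β, imbalance x w z⟫ ^ 2) / #T
          + (2 / n) ^ 2 * (∑ i, w i ^ 2) * Var[fun p : ℝ × ℝ => (p.1 + p.2) / 2; μ₀]
          + ∫ e, commonNoise w e ^ 2 ∂(Measure.pi fun _ => μ₀)
      else 0 := by
  have hmid : MemLp (fun p : ℝ × ℝ => (p.1 + p.2) / 2) 2 μ₀ :=
    (memLp_two_iff_integrable_sq ((h₁.add h₂).div_const 2).aestronglyMeasurable).2 hmid_sq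
  have hmid₀ : ∫ p, (p.1 + p.2) / 2 ∂μ₀ = 0 := by
    rw [integral_div, integral_add h₁ h₂, hmean₁, hmean₂]; simp
  have hhalf : Integrable (fun p : ℝ × ℝ => (p.2 - p.1) / 2) μ₀ := (h₂.sub h₁).div_const 2
  have hhalf₀ : ∫ p, (p.2 - p.1) / 2 ∂μ₀ = 0 := by
    rw [integral_div, integral_sub h₂ h₁, hmean₁, hmean₂]; simp
  have hodd : ∀ e, ∑ z ∈ T, (⟪β, imbalance x w z⟫ + signedNoise w e z) = 0 := fun e =>
    sum_eq_zero_of_involutive_of_neg hTc compl_involutive fun z => by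
      rw [imbalance_compl, signedNoise_compl, inner_neg_right, neg_add]
  have hsq := integrable_and_integral_sq_inner_imbalance_add_signedNoise x w hmid hmid₀ β
  rw [condVariance_eq hT (estimator_eq x w γ β) hodd (fun z => (hsq z).1)
    (integrable_sum_mul_comp_eval _ hhalf)
    (by unfold commonNoise; rw [integral_sum_mul_comp_eval _ hhalf, hhalf₀, mul_zero])]
  have hT₀ : (#T : ℝ) ≠ 0 := by exact_mod_cast hT.card_pos.ne'
  simp_rw [(hsq _).2, sum_add_distrib, sum_const, nsmul_eq_mul, add_div,
    mul_div_cancel_left₀ _ hT₀]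

open Classical in
lemma integral_condVariance_estimator {μ₀ : Measure (ℝ × ℝ)} [IsProbabilityMeasure μ₀]
    (h₁ : Integrable (fun p : ℝ × ℝ => p.1) μ₀) (h₂ : Integrable (fun p : ℝ × ℝ => p.2) μ₀)
    (hmid_sq : Integrable (fun p : ℝ × ℝ => ((p.1 + p.2) / 2) ^ 2) μ₀)
    (hmean₁ : ∫ p, (p : ℝ × ℝ).1 ∂μ₀ = 0) (hmean₂ : ∫ p, (p : ℝ × ℝ).2 ∂μ₀ = 0)
    (γ : Fin d → ℝ)
    {μβ : Measure (EuclideanSpace ℝ (Fin d))} [IsProbabilityMeasure μβ] {l : ℝ}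
    (hμβ : ∀ᵐ b ∂μβ, ‖b‖ = l)
    (hrot : ∀ O : EuclideanSpace ℝ (Fin d) ≃ₗᵢ[ℝ] EuclideanSpace ℝ (Fin d), μβ.map O = μβ)
    {T : Finset (Fin n → Bool)} (hT : T.Nonempty) (hTc : ∀ z ∈ T, zᶜ ∈ T) :
    ∫ β, condVariance (Measure.pi fun _ => μ₀) T (estimator x w γ β) ∂μβ =
      if Integrable (fun e => commonNoise w e ^ 2) (Measure.pi fun _ => μ₀) then
        l ^ 2 / d * ((∑ z ∈ T, ‖imbalance x w z‖ ^ 2) / #T)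
          + (2 / n) ^ 2 * (∑ i, w i ^ 2) * Var[fun p : ℝ × ℝ => (p.1 + p.2) / 2; μ₀]
          + ∫ e, commonNoise w e ^ 2 ∂(Measure.pi fun _ => μ₀)
      else 0 := by
  simp_rw [condVariance_estimator x w h₁ h₂ hmid_sq hmean₁ hmean₂ γ _ hT hTc]
  split_ifs
  · have hint : ∀ z, Integrable (fun β => ⟪β, imbalance x w z⟫ ^ 2) μβ := fun z =>
      integrable_inner_sq_of_ae_norm_eq hμβ _
    have hA : Integrable (fun β => (∑ z ∈ T, ⟪β, imbalance x w z⟫ ^ 2) / #T) μβ :=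
      (integrable_finsetSum _ fun z _ => hint z).div_const _
    rw [integral_add (hA.fun_add (integrable_const _)) (integrable_const _),
      integral_add hA (integrable_const _), integral_div, integral_finsetSum _ fun z _ => hint z]
    simp_rw [integral_inner_sq_of_ae_norm_eq hμβ hrot, finrank_euclideanSpace_fin, integral_const,
      probReal_univ, one_smul, mul_div_assoc', mul_sum]
    congr 3
    exact sum_congr rfl fun z _ => by ring
  · simp

lemma integral_condVariance_estimator_le {μ₀ : Measure (ℝ × ℝ)} [IsProbabilityMeasure μ₀]
    (h₁ : Integrable (fun p : ℝ × ℝ => p.1) μ₀) (h₂ : Integrable (fun p : ℝ × ℝ => p.2) μ₀)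
    (hmid_sq : Integrable (fun p : ℝ × ℝ => ((p.1 + p.2) / 2) ^ 2) μ₀)
    (hmean₁ : ∫ p, (p : ℝ × ℝ).1 ∂μ₀ = 0) (hmean₂ : ∫ p, (p : ℝ × ℝ).2 ∂μ₀ = 0)
    (γ : Fin d → ℝ) {μβ : Measure (EuclideanSpace ℝ (Fin d))} [IsProbabilityMeasure μβ] {l : ℝ}
    (hμβ : ∀ᵐ b ∂μβ, ‖b‖ = l)
    (hrot : ∀ O : EuclideanSpace ℝ (Fin d) ≃ₗᵢ[ℝ] EuclideanSpace ℝ (Fin d), μβ.map O = μβ)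
    {s t : Finset (Fin n → Bool)} {a : ℝ} (hs : ∀ z ∈ s, ‖imbalance x w z‖ ^ 2 ≤ a)
    (ht : ∀ z ∈ t \ s, a ≤ ‖imbalance x w z‖ ^ 2) (hcard : #s ≤ #t) (hs₀ : s.Nonempty)
    (hsc : ∀ z ∈ s, zᶜ ∈ s) (htc : ∀ z ∈ t, zᶜ ∈ t) :
    ∫ β, condVariance (Measure.pi fun _ => μ₀) s (estimator x w γ β) ∂μβ ≤
      ∫ β, condVariance (Measure.pi fun _ => μ₀) t (estimator x w γ β) ∂μβ := by
  rw [integral_condVariance_estimator x w h₁ h₂ hmid_sq hmean₁ hmean₂ γ hμβ hrot hs₀ hsc,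
    integral_condVariance_estimator x w h₁ h₂ hmid_sq hmean₁ hmean₂ γ hμβ hrot
      (card_pos.1 (hs₀.card_pos.trans_le hcard)) htc]
  split_ifs
  · gcongr ?_ + _ + _
    exact mul_le_mul_of_nonneg_left (sum_div_card_le_of_sublevel hs ht hcard hs₀) (by positivity)
  · rfl

end Model

lemma compl_mem_balanced {n : ℕ} (hn : Even n) {z : Fin n → Bool}
    (hz : z ∈ univ.filter fun z : Fin n → Bool => #(univ.filter fun i => z i) = n / 2) :
    zᶜ ∈ univ.filter fun z : Fin n → Bool => #(univ.filter fun i => z i) = n / 2 := by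
  have hsplit := card_filter_add_card_filter_not (s := univ) fun i => z i = true
  have hcompl : (univ.filter fun i => zᶜ i) = univ.filter fun i => ¬z i = true :=
    filter_congr fun i _ => by simp
  obtain ⟨k, rfl⟩ := hn
  simp only [mem_filter, mem_univ, true_and, card_univ, Fintype.card_fin] at hz hsplit ⊢
  rw [hcompl]
  omega

theorem stmt_19_general (n d : ℕ) (heven : Even n)
    (x : Fin n → Fin d → ℝ) (w : Fin n → ℝ)
    (γ : Fin d → ℝ) (l : ℝ) (α a : ℝ)
    -- β uniform on the radius-l sphere: rotation-invariant, supported on the sphere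
    (μβ : Measure (EuclideanSpace ℝ (Fin d))) [IsProbabilityMeasure μβ]
    (hβsupp : μβ {b | ‖b‖ = l} = 1)
    (hβrot : ∀ O : EuclideanSpace ℝ (Fin d) ≃ₗᵢ[ℝ] EuclideanSpace ℝ (Fin d),
      μβ.map O = μβ)
    -- per-unit noise distribution for (ε₀, ε₁): mean zero, Var((ε₁+ε₀)/2) = σ²
    (μ0 : Measure (ℝ × ℝ)) [IsProbabilityMeasure μ0]
    (hi1 : Integrable (fun p : ℝ × ℝ => p.1) μ0)
    (hi2 : Integrable (fun p : ℝ × ℝ => p.2) μ0)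
    (hi3 : Integrable (fun p : ℝ × ℝ => ((p.1 + p.2) / 2) ^ 2) μ0)
    (hmean0 : (∫ p, (p : ℝ × ℝ).1 ∂μ0) = 0) (hmean1 : (∫ p, (p : ℝ × ℝ).2 ∂μ0) = 0)
    (μE : Measure (Fin n → ℝ × ℝ)) (hμE : μE = Measure.pi fun _ : Fin n => μ0)
    -- balanced sign vectors
    (S : Finset (Fin n → Bool))
    (hS : S = Finset.univ.filter fun z : Fin n → Bool =>
      (Finset.univ.filter fun i => z i).card = n / 2)
    (sgn : (Fin n → Bool) → Fin n → ℝ)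
    (hsgn : ∀ z i, sgn z i = if z i then 1 else -1)
    (V : (Fin n → Bool) → Fin d → ℝ)
    (hV : ∀ z k, V z k = (2 / (n : ℝ)) * ∑ i, w i * x i k * sgn z i)
    -- Target-Balance-style acceptance: ‖V‖² < a, of probability exactly 1 - α
    (Ta : Finset (Fin n → Bool))
    (hTa : ∀ z, z ∈ Ta ↔ z ∈ S ∧ (∑ k, (V z k) ^ 2) < a)
    (hTafrac : (Ta.card : ℝ) / S.card = 1 - α)
    (hTane : Ta.Nonempty)
    -- competing symmetric acceptance rule of probability at least 1 - α
    (ρ : (Fin n → Bool) → Bool)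
    (hsym : ∀ z, ρ z = ρ (fun i => !(z i)))
    (Tρ : Finset (Fin n → Bool))
    (hTρ : Tρ = S.filter fun z => ρ z = true)
    (hTρfrac : (1 : ℝ) - α ≤ (Tρ.card : ℝ) / S.card)
    -- linear outcomes: β₁ = β + γ, β₀ = β - γ, so (β₁+β₀)/2 = β
    (τ : EuclideanSpace ℝ (Fin d) → (Fin n → ℝ × ℝ) → (Fin n → Bool) → ℝ)
    (hτ : ∀ β e z, τ β e z = (2 / (n : ℝ)) *
      ∑ i, (if z i then w i * ((∑ k, (β k + γ k) * x i k) + (e i).2)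
                   else -(w i * ((∑ k, (β k - γ k) * x i k) + (e i).1))))
    -- conditional variance over noise and accepted assignment, as a function of β
    (VarC : EuclideanSpace ℝ (Fin d) → Finset (Fin n → Bool) → ℝ)
    (hVarC : ∀ β T', VarC β T' =
      ∫ e, (∑ z ∈ T',
        (τ β e z - ∫ e', (∑ z' ∈ T', τ β e' z') / T'.card ∂μE) ^ 2) / T'.card ∂μE) :
    ∫ β, VarC β Ta ∂μβ ≤ ∫ β, VarC β Tρ ∂μβ := by
  subst hμE hS
  obtain rfl : sgn = fun z i => if z i then 1 else -1 := funext₂ hsgn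
  obtain rfl : τ = estimator x w γ := funext fun β => funext fun e => funext fun z => hτ β e z
  obtain rfl : VarC = fun β T => condVariance (Measure.pi fun _ => μ0) T (estimator x w γ β) :=
    funext₂ hVarC
  have hVnorm : ∀ z, ∑ k, V z k ^ 2 = ‖imbalance x w z‖ ^ 2 := fun z => by
    simp only [EuclideanSpace.norm_sq_eq, Real.norm_eq_abs, sq_abs, imbalance, hV]
  simp only [hVnorm] at hTa
  have hTac : ∀ z ∈ Ta, zᶜ ∈ Ta := fun z hz => by
    rw [hTa] at hz ⊢
    rw [imbalance_compl, norm_neg]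
    exact ⟨compl_mem_balanced heven hz.1, hz.2⟩
  have hTρc : ∀ z ∈ Tρ, zᶜ ∈ Tρ := fun z hz => by
    rw [hTρ, mem_filter] at hz ⊢
    exact ⟨compl_mem_balanced heven hz.1, (hsym z).symm.trans hz.2⟩
  have hcard : #Ta ≤ #Tρ := by
    have hS₀ := (hTane.mono fun z hz => ((hTa z).1 hz).1).card_pos
    exact_mod_cast (div_le_div_iff_of_pos_right (by exact_mod_cast hS₀)).1
      (hTafrac.trans_le hTρfrac)
  have hμβ : ∀ᵐ b ∂μβ, ‖b‖ = l := (ae_iff_measure_eq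
    (measurableSet_eq_fun measurable_norm measurable_const).nullMeasurableSet).2
      (hβsupp.trans measure_univ.symm)
  refine integral_condVariance_estimator_le x w hi1 hi2 hi3 hmean0 hmean1 γ hμβ hβrot
    (fun z hz => ((hTa z).1 hz).2.le) (fun z hz => ?_) hcard hTane hTac hTρc
  obtain ⟨hzρ, hza⟩ := mem_sdiff.1 hz
  exact not_lt.1 fun hlt => hza ((hTa z).2 ⟨(mem_filter.1 (hTρ ▸ hzρ)).1, hlt⟩)

/-- Expected-direction optimality. With `V = (2/n)(wx)ᵀZ` and `β`
uniformly distributed on the sphere of radius `l` in `ℝᵈ` (a rotation-invariant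
probability measure supported on the sphere, independent of everything else),
for the Target-Balance-style acceptance event `{‖V‖² < a}` of probability exactly
`1 - α` under the uniform balanced assignment, and any symmetric acceptance rule
`ρ` with `P(ρ=1) ≥ 1 - α`,
`E_β[Var(τ̂ | x, ‖V‖² < a)] ≤ E_β[Var(τ̂ | x, ρ = 1)]`. -/
theorem stmt_19 (n d : ℕ) (hn : 0 < n) (heven : Even n)
    (x : Fin n → Fin d → ℝ) (w : Fin n → ℝ)
    (γ : Fin d → ℝ) (σ l : ℝ) (hl : 0 < l) (α a : ℝ) (hα : α ∈ Set.Ioo (0 : ℝ) 1)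
    -- β uniform on the radius-l sphere: rotation-invariant, supported on the sphere
    (μβ : Measure (EuclideanSpace ℝ (Fin d))) [IsProbabilityMeasure μβ]
    (hβsupp : μβ {b | ‖b‖ = l} = 1)
    (hβrot : ∀ O : EuclideanSpace ℝ (Fin d) ≃ₗᵢ[ℝ] EuclideanSpace ℝ (Fin d),
      μβ.map O = μβ)
    -- per-unit noise distribution for (ε₀, ε₁): mean zero, Var((ε₁+ε₀)/2) = σ²
    (μ0 : Measure (ℝ × ℝ)) [IsProbabilityMeasure μ0]
    (hi1 : Integrable (fun p : ℝ × ℝ => p.1) μ0)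
    (hi2 : Integrable (fun p : ℝ × ℝ => p.2) μ0)
    (hi3 : Integrable (fun p : ℝ × ℝ => ((p.1 + p.2) / 2) ^ 2) μ0)
    (hmean0 : (∫ p, (p : ℝ × ℝ).1 ∂μ0) = 0) (hmean1 : (∫ p, (p : ℝ × ℝ).2 ∂μ0) = 0)
    (hvar : (∫ p, (((p : ℝ × ℝ).1 + (p : ℝ × ℝ).2) / 2) ^ 2 ∂μ0) = σ ^ 2)
    (μE : Measure (Fin n → ℝ × ℝ)) (hμE : μE = Measure.pi fun _ : Fin n => μ0)
    -- balanced sign vectors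
    (S : Finset (Fin n → Bool))
    (hS : S = Finset.univ.filter fun z : Fin n → Bool =>
      (Finset.univ.filter fun i => z i).card = n / 2)
    (sgn : (Fin n → Bool) → Fin n → ℝ)
    (hsgn : ∀ z i, sgn z i = if z i then 1 else -1)
    (V : (Fin n → Bool) → Fin d → ℝ)
    (hV : ∀ z k, V z k = (2 / (n : ℝ)) * ∑ i, w i * x i k * sgn z i)
    -- Target-Balance-style acceptance: ‖V‖² < a, of probability exactly 1 - α
    (Ta : Finset (Fin n → Bool))
    (hTa : ∀ z, z ∈ Ta ↔ z ∈ S ∧ (∑ k, (V z k) ^ 2) < a)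
    (hTafrac : (Ta.card : ℝ) / S.card = 1 - α)
    (hTane : Ta.Nonempty)
    -- competing symmetric acceptance rule of probability at least 1 - α
    (ρ : (Fin n → Bool) → Bool)
    (hsym : ∀ z, ρ z = ρ (fun i => !(z i)))
    (Tρ : Finset (Fin n → Bool))
    (hTρ : Tρ = S.filter fun z => ρ z = true)
    (hTρfrac : (1 : ℝ) - α ≤ (Tρ.card : ℝ) / S.card)
    (hTρne : Tρ.Nonempty)
    -- linear outcomes: β₁ = β + γ, β₀ = β - γ, so (β₁+β₀)/2 = β
    (τ : EuclideanSpace ℝ (Fin d) → (Fin n → ℝ × ℝ) → (Fin n → Bool) → ℝ)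
    (hτ : ∀ β e z, τ β e z = (2 / (n : ℝ)) *
      ∑ i, (if z i then w i * ((∑ k, (β k + γ k) * x i k) + (e i).2)
                   else -(w i * ((∑ k, (β k - γ k) * x i k) + (e i).1))))
    -- conditional variance over noise and accepted assignment, as a function of β
    (VarC : EuclideanSpace ℝ (Fin d) → Finset (Fin n → Bool) → ℝ)
    (hVarC : ∀ β T', VarC β T' =
      ∫ e, (∑ z ∈ T',
        (τ β e z - ∫ e', (∑ z' ∈ T', τ β e' z') / T'.card ∂μE) ^ 2) / T'.card ∂μE)
    (hinta : Integrable (fun β => VarC β Ta) μβ)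
    (hintρ : Integrable (fun β => VarC β Tρ) μβ) :
    ∫ β, VarC β Ta ∂μβ ≤ ∫ β, VarC β Tρ ∂μβ :=
  stmt_19_general n d heven x w γ l α a μβ hβsupp hβrot μ0 hi1 hi2 hi3 hmean0 hmean1 μE hμE S hS sgn
    hsgn V hV Ta hTa hTafrac hTane ρ hsym Tρ hTρ hTρfrac τ hτ VarC hVarC
end
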